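/- arXiv:2601.00033 — 6 statements merged into one kernel-verified Lean document; each statement's English description precedes it below -/
import Mathlib

section
/- The Maschke octic is smooth; equivalently, the only common zero in ℂ⁴ of the four partial derivatives ∂f/∂x, ∂f/∂y, ∂f/∂z, ∂f/∂t of f is the point (0,0,0,0). -/
/-!
With `Xᵢ = xᵢ⁴`, `S = ∑ Xᵢ` and `P = ∏ xᵢ²`, one has `xᵢ ∂f/∂xᵢ = 8 (7 S Xᵢ - 6 Xᵢ² + 42 P)`.
At a common zero of the partial derivatives the four numbers `Xᵢ` are therefore roots of the
single quadratic `6u² - 7Su - 42P`. Its roots `X₀` and `w` satisfy `6(X₀ + w) = 7S` and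
`X₀w = -7P`; each possible multiplicity pattern of `X₀, …, X₃` makes `w` a fixed multiple of
`X₀`, and then `P² = X₀X₁X₂X₃` forces `X₀ = 0`. By symmetry every `Xᵢ` vanishes.
-/

open Matrix MvPolynomial

/-- The Maschke octic polynomial
`f = x⁸+y⁸+z⁸+t⁸ + 14(x⁴y⁴+x⁴z⁴+x⁴t⁴+y⁴z⁴+y⁴t⁴+z⁴t⁴) + 168x²y²z²t²`. -/
noncomputable def maschkeF : MvPolynomial (Fin 4) ℂ :=
  X 0 ^ 8 + X 1 ^ 8 + X 2 ^ 8 + X 3 ^ 8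
    + 14 * (X 0 ^ 4 * X 1 ^ 4 + X 0 ^ 4 * X 2 ^ 4 + X 0 ^ 4 * X 3 ^ 4
        + X 1 ^ 4 * X 2 ^ 4 + X 1 ^ 4 * X 3 ^ 4 + X 2 ^ 4 * X 3 ^ 4)
    + 168 * (X 0 ^ 2 * X 1 ^ 2 * X 2 ^ 2 * X 3 ^ 2)

theorem eq_or_add_eq_of_quadratic {S p u w : ℂ} (hu : 6 * u ^ 2 - 7 * S * u = 42 * p)
    (hw : 6 * w ^ 2 - 7 * S * w = 42 * p) : w = u ∨ 6 * (u + w) = 7 * S := by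
  have h : (w - u) * (6 * (u + w) - 7 * S) = 0 := by linear_combination hw - hu
  exact (mul_eq_zero.1 h).imp sub_eq_zero.1 sub_eq_zero.1

theorem eq_zero_of_quadratic_of_sq_eq_prod {a b c d S p : ℂ} (hS : a + b + c + d = S)
    (hp : p ^ 2 = a * b * c * d) (ha : 6 * a ^ 2 - 7 * S * a = 42 * p)
    (hb : 6 * b ^ 2 - 7 * S * b = 42 * p) (hc : 6 * c ^ 2 - 7 * S * c = 42 * p)
    (hd : 6 * d ^ 2 - 7 * S * d = 42 * p) : a = 0 := by
  obtain ⟨w, hw⟩ : ∃ w, 6 * (a + w) = 7 * S := ⟨7 * S / 6 - a, by ring⟩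
  have root : ∀ u, 6 * u ^ 2 - 7 * S * u = 42 * p → u = a ∨ u = w := fun u hu =>
    (eq_or_add_eq_of_quadratic ha hu).imp id fun h => by linear_combination (h - hw) / 6
  -- In the eight cases `hS` and `hw` give `w = 11a/3, -15a, -a` or `-a/15`; `ha` gives
  -- `7p = -aw`, and then `hp` becomes a nonzero multiple of `a⁴` being zero.
  rcases root b hb with rfl | rfl <;> rcases root c hc with rfl | rfl <;>
    rcases root d hd with rfl | rfl <;> grind

theorem eq_zero_of_forall_quadratic_of_sq_eq_prod {a : Fin 4 → ℂ} {p : ℂ}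
    (hp : p ^ 2 = ∏ i, a i) (h : ∀ i, 6 * a i ^ 2 - 7 * (∑ j, a j) * a i = 42 * p) :
    a = 0 := by
  funext i
  set x := a ∘ Equiv.swap 0 i
  have hsum : ∑ j, x j = ∑ j, a j := Equiv.sum_comp _ a
  have hprod : ∏ j, x j = ∏ j, a j := Equiv.prod_comp _ a
  have hx0 : x 0 = 0 := eq_zero_of_quadratic_of_sq_eq_prod (b := x 1) (c := x 2) (d := x 3)
    (by rw [← Fin.sum_univ_four, hsum]) (by rw [hp, ← hprod, Fin.prod_univ_four])
    (h _) (h _) (h _) (h _)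
  simpa [x] using hx0

theorem mul_eval_pderiv_maschkeF (v : Fin 4 → ℂ) (i : Fin 4) :
    v i * eval v (pderiv i maschkeF) =
      8 * (7 * (∑ j, v j ^ 4) * v i ^ 4 - 6 * (v i ^ 4) ^ 2 + 42 * ∏ j, v j ^ 2) := by
  have h14 : pderiv i (14 : MvPolynomial (Fin 4) ℂ) = 0 := pderiv_C (a := 14)
  have h168 : pderiv i (168 : MvPolynomial (Fin 4) ℂ) = 0 := pderiv_C (a := 168)
  simp only [maschkeF, map_add, Derivation.leibniz, Derivation.leibniz_pow, h14, h168,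
    pderiv_X, Fin.sum_univ_four, Fin.prod_univ_four]
  fin_cases i <;> simp <;> ring

/-- The Maschke octic is smooth: the only common zero in `ℂ⁴` of the four partial
derivatives of `f` is the origin. -/
theorem maschke_octic_smooth (v : Fin 4 → ℂ)
    (h : ∀ j : Fin 4, MvPolynomial.eval v (MvPolynomial.pderiv j maschkeF) = 0) :
    v = 0 := by
  have hquad : ∀ i, 6 * (v i ^ 4) ^ 2 - 7 * (∑ j, v j ^ 4) * v i ^ 4 = 42 * ∏ j, v j ^ 2 :=
    fun i => by linear_combination (1 / 8 : ℂ) * mul_eval_pderiv_maschkeF v i - v i / 8 * h i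
  have hsq : (∏ j, v j ^ 2) ^ 2 = ∏ j, v j ^ 4 := by
    rw [← Finset.prod_pow]
    simp only [← pow_mul]
  have h4 : (fun i => v i ^ 4) = 0 := eq_zero_of_forall_quadratic_of_sq_eq_prod hsq hquad
  funext i
  exact pow_eq_zero_iff four_ne_zero |>.1 (congrFun h4 i)
end

section
/- The polynomial f = x⁸+y⁸+z⁸+t⁸ + 14(x⁴y⁴+x⁴z⁴+x⁴t⁴+y⁴z⁴+y⁴t⁴+z⁴t⁴) + 168x²y²z²t² is irreducible in the polynomial ring ℂ[x,y,z,t]. -/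
/-!
View `f` as a monic octic in `x` over `ℂ[y, z, t]` and specialise `(y, z, t) ↦ (u, 1, 0)`: the image
is `Q(x⁴)` with `Q(Y) = Y² + 14(u⁴ + 1) Y + (u⁸ + 14u⁴ + 1)` over `ℂ[u]`, and irreducibility of a
specialisation of a monic polynomial lifts back. `Q` is irreducible because its discriminant
`192u⁸ + 336u⁴ + 192` is squarefree. If `h` is irreducible and `g` is a factor of `h(X²)` with
`0 < deg g ≤ deg h`, then `g(X) g(-X) = k(X²)` with `k ∣ h²`, so by degrees `k` is associated to `h`
and `h(0)` is a unit times `g(0)²`. Since `h(0) = u⁸ + 14u⁴ + 1` is squarefree and not a unit, this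
cannot happen, first for `h = Q` and then for `h = Q(X²)`.
-/

open Matrix MvPolynomial

open Polynomial

theorem Squarefree.not_associated_mul_self {M : Type*} [CommMonoid M] {a : M} (ha : Squarefree a)
    (hu : ¬IsUnit a) (c : M) : ¬Associated (c * c) a := fun h =>
  hu (h.isUnit ((ha c h.dvd).mul (ha c h.dvd)))

namespace Polynomial

section CommRing

variable {R : Type*} [CommRing R]

theorem dvd_of_expand_dvd_expand {p : ℕ} (hp : p ≠ 0) {f g : R[X]}
    (h : expand R p f ∣ expand R p g) : f ∣ g := by
  obtain ⟨m, hm⟩ := h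
  refine ⟨contract p m, ?_⟩
  rw [← contract_expand (p := p) hp (f := g), hm, mul_comm, contract_mul_expand hp, mul_comm]

theorem coeff_zero_expand {p : ℕ} (hp : 0 < p) (f : R[X]) : (expand R p f).coeff 0 = f.coeff 0 := by
  simpa using coeff_expand_mul hp f 0

theorem expand_two_comp_neg_X (f : R[X]) : (expand R 2 f).comp (-X) = expand R 2 f := by
  rw [expand_eq_comp_X_pow, comp_assoc, X_pow_comp, neg_sq]

variable [IsDomain R]

theorem expand_two_contract_of_comp_neg_X_eq [NeZero (2 : R)] {p : R[X]}
    (hp : p.comp (-X) = p) : expand R 2 (contract 2 p) = p := by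
  ext n
  rw [coeff_expand two_pos, coeff_contract two_ne_zero]
  split_ifs with h
  · rw [Nat.div_mul_cancel h]
  · have hn : p.coeff n = -p.coeff n := by
      conv_lhs => rw [← hp, ← neg_one_mul (X : R[X]), ← C_1, ← C_neg, comp_C_mul_X_coeff]
      rw [(Nat.odd_iff.mpr (Nat.two_dvd_ne_zero.mp h)).neg_one_pow, mul_neg_one]
    have h2 : (2 : R) * p.coeff n = 0 := by linear_combination hn
    exact ((mul_eq_zero.mp h2).resolve_left two_ne_zero).symm

theorem not_isUnit_C_mul_X_pow_eight_add {α : R} (β : R) (hα : α ≠ 0) :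
    ¬IsUnit (C α * X ^ 8 + C β * X ^ 4 + C α) :=
  not_isUnit_of_natDegree_pos _ (by
    have : (C α * X ^ 8 + C β * X ^ 4 + C α).natDegree = 8 := by compute_degree!
    omega)

theorem irreducible_X_sq_add_of_squarefree_discrim {a b : R} (hsq : Squarefree (discrim 1 a b))
    (hu : ¬IsUnit (discrim 1 a b)) : Irreducible (X ^ 2 + C a * X + C b) := by
  have hm : (X ^ 2 + C a * X + C b).Monic := by monicity!
  by_contra hred
  obtain ⟨c₁, c₂, hb, ha⟩ :=
    (hm.not_irreducible_iff_exists_add_mul_eq_coeff (by compute_degree!)).mp hred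
  simp only [coeff_add, coeff_X_pow, coeff_C_mul_X, coeff_C] at ha hb
  norm_num at ha hb
  refine hsq.not_associated_mul_self hu (c₁ - c₂) (Associated.of_eq ?_)
  rw [discrim, ha, hb]
  ring

theorem irreducible_expand_two [NeZero (2 : R)] {h : R[X]} (hm : h.Monic) (hp : Prime h)
    (hsq : Squarefree (h.coeff 0)) (hu : ¬IsUnit (h.coeff 0)) : Irreducible (expand R 2 h) := by
  have hH : (expand R 2 h).Monic := hm.expand two_pos
  have hH1 : expand R 2 h ≠ 1 := fun h1 =>
    hp.not_isUnit ((expand_eq_C two_pos).mp (h1.trans C_1.symm) ▸ isUnit_C.mpr isUnit_one)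
  rw [hH.irreducible_iff_lt_natDegree_lt hH1, natDegree_expand, Nat.mul_div_cancel _ two_pos]
  intro g hg hdeg hdvd
  obtain ⟨hdeg0, hdegn⟩ := Finset.mem_Ioc.mp hdeg
  set k := contract 2 (g * g.comp (-X))
  have hk : expand R 2 k = g * g.comp (-X) := expand_two_contract_of_comp_neg_X_eq <| by
    rw [mul_comp_neg_X, comp_neg_X_comp_neg_X, mul_comm]
  have hk_dvd : k ∣ h ^ 2 := by
    refine dvd_of_expand_dvd_expand two_ne_zero ?_
    rw [hk, map_pow, sq]
    refine mul_dvd_mul hdvd ?_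
    rw [← dvd_comp_neg_X_iff, expand_two_comp_neg_X]
    exact hdvd
  have hk_deg : k.natDegree = g.natDegree := by
    have := congrArg natDegree hk
    rw [natDegree_expand, natDegree_mul hg.ne_zero (comp_neg_X_eq_zero_iff.not.mpr hg.ne_zero),
      natDegree_comp, natDegree_neg, natDegree_X, mul_one] at this
    omega
  obtain ⟨i, -, hki⟩ := (dvd_prime_pow hp 2).mp hk_dvd
  have hi1 : i = 1 := by
    have := natDegree_eq_of_degree_eq (degree_eq_degree_of_associated hki)
    rw [hk_deg, hm.natDegree_pow] at this
    rcases i with _ | _ | i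
    · omega
    · rfl
    · nlinarith
  subst hi1
  have hk0 : k.coeff 0 = g.coeff 0 * g.coeff 0 := by
    simpa [coeff_zero_eq_eval_zero, eval_comp] using congrArg (eval 0) hk
  have := hki.map (constantCoeff (R := R))
  rw [pow_one, constantCoeff_apply, constantCoeff_apply, hk0] at this
  exact hsq.not_associated_mul_self hu _ this

theorem irreducible_expand_two_pow [UniqueFactorizationMonoid R] [NeZero (2 : R)] {h : R[X]}
    (hm : h.Monic) (hirr : Irreducible h) (hsq : Squarefree (h.coeff 0))
    (hu : ¬IsUnit (h.coeff 0)) (n : ℕ) : Irreducible (expand R (2 ^ n) h) := by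
  induction n with
  | zero => simpa using hirr
  | succ n ih =>
    rw [pow_succ', expand_mul]
    exact irreducible_expand_two (hm.expand (by positivity))
      (UniqueFactorizationMonoid.irreducible_iff_prime.mp ih)
      (by rwa [coeff_zero_expand (by positivity)]) (by rwa [coeff_zero_expand (by positivity)])

end CommRing

theorem separable_C_mul_X_pow_eight_add {K : Type*} [Field K] [NeZero (2 : K)] {α β : K}
    (hα : α ≠ 0) (hβ : β ^ 2 ≠ 4 * α ^ 2) :
    (C α * X ^ 8 + C β * X ^ 4 + C α).Separable := by
  set p := C α * X ^ 8 + C β * X ^ 4 + C α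
  set d := β ^ 2 - 4 * α ^ 2
  have hc : 4 * α * d ≠ 0 := mul_ne_zero (mul_ne_zero (by
    rw [show (4 : K) = 2 * 2 by norm_num]; exact mul_ne_zero two_ne_zero two_ne_zero) hα)
    (sub_ne_zero.mpr hβ)
  have hp' : derivative p = 4 * X ^ 3 * (2 * C α * X ^ 4 + C β) := by
    simp only [p, derivative_add, derivative_C_mul_X_pow, derivative_C, C_mul, map_natCast]
    push_cast
    ring
  -- With `v = X⁴`: `(2αv + β)² = 4αp + d` and `v (αv + β) = p - α`, which combine to `key`.
  have key : 4 * (4 * C α * p + C d - 4 * C α ^ 2) * p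
      - X * (C α * X ^ 4 + C β) * (2 * C α * X ^ 4 + C β) * derivative p = C (4 * α * d) := by
    rw [hp']
    simp only [p, d, map_mul, map_sub, map_pow, map_ofNat]
    ring
  refine ⟨C (4 * α * d)⁻¹ * (4 * (4 * C α * p + C d - 4 * C α ^ 2)),
    -(C (4 * α * d)⁻¹ * (X * (C α * X ^ 4 + C β) * (2 * C α * X ^ 4 + C β))), ?_⟩
  have hinv : C (4 * α * d)⁻¹ * C (4 * α * d) = 1 := by rw [← C_mul, inv_mul_cancel₀ hc, C_1]
  linear_combination C (4 * α * d)⁻¹ * key + hinv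

noncomputable def maschkeQuadratic : ℂ[X][X] :=
  X ^ 2 + C (14 * X ^ 4 + 14) * X + C (X ^ 8 + 14 * X ^ 4 + 1)

theorem squarefree_and_not_isUnit_X_pow_eight_add :
    Squarefree (X ^ 8 + 14 * X ^ 4 + 1 : ℂ[X]) ∧ ¬IsUnit (X ^ 8 + 14 * X ^ 4 + 1 : ℂ[X]) := by
  have hb : (X ^ 8 + 14 * X ^ 4 + 1 : ℂ[X]) = C 1 * X ^ 8 + C 14 * X ^ 4 + C 1 := by
    simp [map_ofNat]
  rw [hb]
  exact ⟨(separable_C_mul_X_pow_eight_add one_ne_zero (by norm_num)).squarefree,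
    not_isUnit_C_mul_X_pow_eight_add _ one_ne_zero⟩

theorem irreducible_maschkeQuadratic : Irreducible maschkeQuadratic := by
  have hdiscrim : discrim 1 (14 * X ^ 4 + 14 : ℂ[X]) (X ^ 8 + 14 * X ^ 4 + 1)
      = C 192 * X ^ 8 + C 336 * X ^ 4 + C 192 := by
    simp only [discrim, map_ofNat]
    ring
  refine irreducible_X_sq_add_of_squarefree_discrim ?_ ?_ <;> rw [hdiscrim]
  · exact (separable_C_mul_X_pow_eight_add (by norm_num) (by norm_num)).squarefree
  · exact not_isUnit_C_mul_X_pow_eight_add _ (by norm_num)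

theorem irreducible_expand_four_maschkeQuadratic :
    Irreducible (expand ℂ[X] 4 maschkeQuadratic) := by
  have hQ0 : maschkeQuadratic.coeff 0 = X ^ 8 + 14 * X ^ 4 + 1 := by
    rw [maschkeQuadratic, coeff_add, coeff_add, coeff_C_zero, coeff_C_mul_X, coeff_X_pow]
    simp
  have hmonic : maschkeQuadratic.Monic := by
    unfold maschkeQuadratic
    monicity!
  obtain ⟨hsq, hu⟩ := squarefree_and_not_isUnit_X_pow_eight_add
  rw [← hQ0] at hsq hu
  exact irreducible_expand_two_pow hmonic irreducible_maschkeQuadratic hsq hu 2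

end Polynomial

namespace MvPolynomial

theorem finSuccEquiv_maschkeF :
    finSuccEquiv ℂ 3 maschkeF =
      Polynomial.X ^ 8 + Polynomial.C (14 * (X 0 ^ 4 + X 1 ^ 4 + X 2 ^ 4)) * Polynomial.X ^ 4
        + Polynomial.C (168 * (X 0 ^ 2 * X 1 ^ 2 * X 2 ^ 2)) * Polynomial.X ^ 2
        + Polynomial.C (X 0 ^ 8 + X 1 ^ 8 + X 2 ^ 8
          + 14 * (X 0 ^ 4 * X 1 ^ 4 + X 0 ^ 4 * X 2 ^ 4 + X 1 ^ 4 * X 2 ^ 4)) := by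
  rw [maschkeF, show (1 : Fin 4) = Fin.succ 0 from rfl, show (2 : Fin 4) = Fin.succ 1 from rfl,
    show (3 : Fin 4) = Fin.succ 2 from rfl]
  simp only [map_add, map_mul, map_pow, map_ofNat, finSuccEquiv_X_zero, finSuccEquiv_X_succ]
  ring

theorem monic_finSuccEquiv_maschkeF : (finSuccEquiv ℂ 3 maschkeF).Monic := by
  rw [finSuccEquiv_maschkeF]
  monicity!

theorem map_finSuccEquiv_maschkeF :
    (finSuccEquiv ℂ 3 maschkeF).map
        (aeval ![Polynomial.X, 1, 0] : MvPolynomial (Fin 3) ℂ →ₐ[ℂ] ℂ[X]).toRingHom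
      = Polynomial.expand ℂ[X] 4 maschkeQuadratic := by
  rw [finSuccEquiv_maschkeF, maschkeQuadratic]
  simp only [AlgHom.toRingHom_eq_coe, Fin.isValue, map_mul, map_ofNat, map_add, map_pow,
    Polynomial.map_add, Polynomial.map_pow, Polynomial.map_X, Polynomial.map_mul,
    Polynomial.map_ofNat, Polynomial.map_C, RingHom.coe_coe, aeval_X, cons_val_zero, cons_val_one,
    map_one, one_pow, cons_val, map_zero, ne_eq, OfNat.ofNat_ne_zero, not_false_eq_true, zero_pow,
    add_zero, mul_one, mul_zero, zero_mul, Polynomial.expand_X, Polynomial.expand_C]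
  ring

end MvPolynomial

/-- The Maschke polynomial `f` is irreducible in `ℂ[x,y,z,t]`. -/
theorem maschkeF_irreducible : Irreducible maschkeF := by
  have h := irreducible_expand_four_maschkeQuadratic
  rw [← map_finSuccEquiv_maschkeF] at h
  exact (MulEquiv.irreducible_iff (finSuccEquiv ℂ 3)).mp
    (monic_finSuccEquiv_maschkeF.irreducible_of_irreducible_map _ _ h)
end

section
/- The line L₁₆₀ is contained in the Maschke octic: every point (x,y,z,t) ∈ ℂ⁴ satisfying 2x + (i+1)(√3+1)y = 0 and 2z + (i+1)(√3+1)t = 0 satisfies f(x,y,z,t) = 0. -/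
/-!
On `L₁₆₀` we have `x = s y` and `z = s t` with `s = -(i+1)(√3+1)/2`, and there the octic factors as
`f = (s⁸ + 14 s⁴ + 1) (y⁸ + 14 y⁴ t⁴ + t⁸)`. Since `(i+1)⁴ = -4` and `(√3+1)⁴ = 28 + 16√3`, we get
`s⁴ = -(7 + 4√3)`, which is a root of `u² + 14 u + 1`.
-/

open Matrix MvPolynomial

theorem eval_maschkeF_of_eq_mul {s : ℂ} {v : Fin 4 → ℂ} (h0 : v 0 = s * v 1)
    (h2 : v 2 = s * v 3) :
    eval v maschkeF =
      ((s ^ 4) ^ 2 + 14 * s ^ 4 + 1) * (v 1 ^ 8 + 14 * v 1 ^ 4 * v 3 ^ 4 + v 3 ^ 8) := by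
  simp only [maschkeF, map_add, map_mul, map_pow, eval_X, map_ofNat, h0, h2]
  ring

theorem neg_half_mul_I_add_one_mul_add_one_pow_four {r : ℂ} (hr : r ^ 2 = 3) :
    (-((Complex.I + 1) * (r + 1) / 2)) ^ 4 = -(7 + 4 * r) := by
  have hI : (Complex.I + 1) ^ 4 = -4 := by
    linear_combination (Complex.I ^ 2 + 4 * Complex.I + 5) * Complex.I_sq
  have hr4 : (r + 1) ^ 4 = 28 + 16 * r := by
    linear_combination (r ^ 2 + 4 * r + 9) * hr
  linear_combination ((r + 1) ^ 4 / 16) * hI - (1 / 4) * hr4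

/-- The line `L₁₆₀` is contained in the Maschke octic. -/
theorem L160_subset_maschke (r3 : ℂ) (hr3 : r3 ^ 2 = 3) (v : Fin 4 → ℂ)
    (h1 : 2 * v 0 + (Complex.I + 1) * (r3 + 1) * v 1 = 0)
    (h2 : 2 * v 2 + (Complex.I + 1) * (r3 + 1) * v 3 = 0) :
    MvPolynomial.eval v maschkeF = 0 := by
  set s : ℂ := -((Complex.I + 1) * (r3 + 1) / 2) with hs
  have h0 : v 0 = s * v 1 := by linear_combination h1 / 2
  have h2' : v 2 = s * v 3 := by linear_combination h2 / 2
  have hroot : (s ^ 4) ^ 2 + 14 * s ^ 4 + 1 = 0 := by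
    rw [hs, neg_half_mul_I_add_one_mul_add_one_pow_four hr3]
    linear_combination 16 * hr3
  rw [eval_maschkeF_of_eq_mul h0 h2', hroot, zero_mul]
end

section
/- The natural action of G₃₁ on ℂ⁴ is irreducible: the only linear subspaces W ⊆ ℂ⁴ satisfying sₖ W ⊆ W for all k ∈ {1,2,3,4,5} are W = {0} and W = ℂ⁴. -/
open Matrix MvPolynomial

/-- The reflection `s₁`: permutation matrix swapping the first two basis vectors. -/
noncomputable def s1 : Matrix (Fin 4) (Fin 4) ℂ := !![0,1,0,0; 1,0,0,0; 0,0,1,0; 0,0,0,1]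

/-- The reflection `s₂`: permutation matrix swapping the second and third basis vectors. -/
noncomputable def s2 : Matrix (Fin 4) (Fin 4) ℂ := !![1,0,0,0; 0,0,1,0; 0,1,0,0; 0,0,0,1]

/-- The reflection `s₃`. -/
noncomputable def s3 : Matrix (Fin 4) (Fin 4) ℂ :=
  !![0,-Complex.I,0,0; Complex.I,0,0,0; 0,0,1,0; 0,0,0,1]

/-- The reflection `s₄`. -/
noncomputable def s4 : Matrix (Fin 4) (Fin 4) ℂ :=
  ((1 : ℂ)/2) • !![1,-1,-1,-1; -1,1,-1,-1; -1,-1,1,-1; -1,-1,-1,1]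

/-- The reflection `s₅ = diag(−1,1,1,1)`. -/
noncomputable def s5 : Matrix (Fin 4) (Fin 4) ℂ := !![-1,0,0,0; 0,1,0,0; 0,0,1,0; 0,0,0,1]

/-
The reflection `s₅` has root `e₀`, so a stable subspace containing a vector with nonzero first
coordinate contains `e₀`; the permutations `s₁, s₂` and `s₄ e₀ = (e₀ - e₁ - e₂ - e₃)/2` then
produce the whole standard basis. If instead every vector of `W` has first coordinate zero, the
same three matrices move each other coordinate into the first place, so `W = 0`.
-/

open Module.End

theorem Matrix.mulVec_mem_of_mem_invtSubmodule {R n : Type*} [CommSemiring R] [Fintype n]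
    {A : Matrix n n R} {W : Submodule R (n → R)} (hW : W ∈ invtSubmodule A.mulVecLin)
    {v : n → R} (hv : v ∈ W) : A *ᵥ v ∈ W :=
  (mem_invtSubmodule_iff_forall_mem_of_mem _).mp hW v hv

theorem Submodule.eq_top_of_forall_single_mem {R ι : Type*} [Semiring R] [Fintype ι]
    [DecidableEq ι] {W : Submodule R (ι → R)} (h : ∀ i, Pi.single i 1 ∈ W) : W = ⊤ := by
  rw [eq_top_iff, ← (Pi.basisFun R ι).span_eq, Submodule.span_le]
  rintro _ ⟨i, rfl⟩
  simpa using h i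

theorem s1_mulVec_apply_zero (v : Fin 4 → ℂ) : (s1 *ᵥ v) 0 = v 1 := by
  simp [s1, mulVec, dotProduct, Fin.sum_univ_four]

theorem s1_mulVec_s2_mulVec_apply_zero (v : Fin 4 → ℂ) : (s1 *ᵥ s2 *ᵥ v) 0 = v 2 := by
  simp [s1, s2, mulVec, dotProduct, Fin.sum_univ_four]

theorem s4_mulVec_apply_zero (v : Fin 4 → ℂ) :
    (s4 *ᵥ v) 0 = (v 0 - v 1 - v 2 - v 3) / 2 := by
  simp [s4, mulVec, dotProduct, Fin.sum_univ_four]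
  ring

theorem sub_s5_mulVec (v : Fin 4 → ℂ) : v - s5 *ᵥ v = Pi.single 0 (2 * v 0) := by
  ext i
  fin_cases i <;> simp [s5, dotProduct, Fin.sum_univ_four, two_mul]

theorem s1_mulVec_single_zero : s1 *ᵥ Pi.single 0 1 = Pi.single 1 1 := by
  ext i
  fin_cases i <;> simp [s1, mulVec, dotProduct, Fin.sum_univ_four]

theorem s2_mulVec_single_one : s2 *ᵥ Pi.single 1 1 = Pi.single 2 1 := by
  ext i
  fin_cases i <;> simp [s2, mulVec, dotProduct, Fin.sum_univ_four]

theorem single_three_eq_of_s4 :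
    (Pi.single 3 1 : Fin 4 → ℂ) =
      Pi.single 0 1 - Pi.single 1 1 - Pi.single 2 1 - (2 : ℂ) • s4 *ᵥ Pi.single 0 1 := by
  ext i
  fin_cases i <;> simp [s4]

section Stable

variable {W : Submodule ℂ (Fin 4 → ℂ)}

theorem eq_bot_of_forall_apply_zero_eq_zero (h1 : W ∈ invtSubmodule s1.mulVecLin)
    (h2 : W ∈ invtSubmodule s2.mulVecLin) (h4 : W ∈ invtSubmodule s4.mulVecLin)
    (h : ∀ v ∈ W, v 0 = 0) : W = ⊥ := by
  refine (Submodule.eq_bot_iff W).mpr fun v hv => ?_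
  have hv0 : v 0 = 0 := h v hv
  have hv1 : v 1 = 0 := by
    simpa [s1_mulVec_apply_zero] using h _ (mulVec_mem_of_mem_invtSubmodule h1 hv)
  have hv2 : v 2 = 0 := by
    simpa [s1_mulVec_s2_mulVec_apply_zero] using
      h _ (mulVec_mem_of_mem_invtSubmodule h1 (mulVec_mem_of_mem_invtSubmodule h2 hv))
  have hv3 : v 3 = 0 := by
    simpa [s4_mulVec_apply_zero, hv0, hv1, hv2] using
      h _ (mulVec_mem_of_mem_invtSubmodule h4 hv)
  ext i
  fin_cases i <;> assumption

theorem single_zero_mem_of_apply_zero_ne_zero (h5 : W ∈ invtSubmodule s5.mulVecLin)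
    {v : Fin 4 → ℂ} (hv : v ∈ W) (hv0 : v 0 ≠ 0) : Pi.single 0 1 ∈ W := by
  have hsub : Pi.single 0 (2 * v 0) ∈ W :=
    sub_s5_mulVec v ▸ W.sub_mem hv (mulVec_mem_of_mem_invtSubmodule h5 hv)
  have hunit : (2 * v 0)⁻¹ * (2 * v 0) = 1 := inv_mul_cancel₀ (mul_ne_zero two_ne_zero hv0)
  have := W.smul_mem (2 * v 0)⁻¹ hsub
  rwa [← Pi.single_smul', smul_eq_mul, hunit] at this

theorem eq_top_of_single_zero_mem (h1 : W ∈ invtSubmodule s1.mulVecLin)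
    (h2 : W ∈ invtSubmodule s2.mulVecLin) (h4 : W ∈ invtSubmodule s4.mulVecLin)
    (he0 : Pi.single 0 1 ∈ W) : W = ⊤ := by
  have he1 : Pi.single 1 1 ∈ W := s1_mulVec_single_zero ▸ mulVec_mem_of_mem_invtSubmodule h1 he0
  have he2 : Pi.single 2 1 ∈ W := s2_mulVec_single_one ▸ mulVec_mem_of_mem_invtSubmodule h2 he1
  have he3 : Pi.single 3 1 ∈ W := single_three_eq_of_s4 ▸
    W.sub_mem (W.sub_mem (W.sub_mem he0 he1) he2)
      (W.smul_mem _ (mulVec_mem_of_mem_invtSubmodule h4 he0))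
  refine Submodule.eq_top_of_forall_single_mem fun i => ?_
  fin_cases i <;> assumption

end Stable

/-- The action of `G₃₁` on `ℂ⁴` is irreducible: a linear subspace stable under
all five generating reflections is `{0}` or `ℂ⁴`. -/
theorem G31_irreducible (W : Submodule ℂ (Fin 4 → ℂ))
    (hW : ∀ s ∈ ({s1, s2, s3, s4, s5} : Set (Matrix (Fin 4) (Fin 4) ℂ)),
      W.map s.mulVecLin ≤ W) :
    W = ⊥ ∨ W = ⊤ := by
  have hinv : ∀ s ∈ ({s1, s2, s3, s4, s5} : Set (Matrix (Fin 4) (Fin 4) ℂ)),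
      W ∈ invtSubmodule s.mulVecLin :=
    fun s hs => (mem_invtSubmodule_iff_map_le _).mpr (hW s hs)
  have h1 := hinv s1 (by simp)
  have h2 := hinv s2 (by simp)
  have h4 := hinv s4 (by simp)
  by_cases hzero : ∀ v ∈ W, v 0 = 0
  · exact Or.inl (eq_bot_of_forall_apply_zero_eq_zero h1 h2 h4 hzero)
  push Not at hzero
  obtain ⟨v, hv, hv0⟩ := hzero
  exact Or.inr (eq_top_of_single_zero_mem h1 h2 h4
    (single_zero_mem_of_apply_zero_ne_zero (hinv s5 (by simp)) hv hv0))
end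

section
/- The polynomial f is invariant under G₃₁: for each k ∈ {1,2,3,4,5}, the polynomial obtained from f by the linear substitution of variables given by the matrix sₖ (i.e., the pullback of f along v ↦ sₖ v) equals f. -/
open Matrix MvPolynomial

/-! Over the infinite field `ℂ` a polynomial is determined by its values, so invariance under
the substitution `X ↦ s X` amounts to `f (s v) = f v` for all `v`. The generators `s₁, s₂, s₃, s₅`
are monomial: `f` is symmetric, depends on each variable only through its square, and the squares
of `s₃ v` are `(-y², -x², z², t²)`, which leaves every term of `f` unchanged. For `s₄` the identity
is checked by expanding. -/

section LinearSubstitution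

variable {σ R : Type*} [Fintype σ]

theorem eval_aeval_mulVec [CommSemiring R] (s : Matrix σ σ R) (x : σ → R)
    (p : MvPolynomial σ R) :
    eval x (aeval (fun j => ∑ k, C (s j k) * X k) p) = eval (s *ᵥ x) p := by
  rw [aeval_def, algebraMap_eq, ← eval_assoc]
  congr 2 with j
  simp [mulVec, dotProduct, mul_comm]

theorem aeval_mulVec_eq_self_iff [CommRing R] [IsDomain R] [Infinite R] (s : Matrix σ σ R)
    (p : MvPolynomial σ R) :
    aeval (fun j => ∑ k, C (s j k) * X k) p = p ↔ ∀ x, eval (s *ᵥ x) p = eval x p := by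
  simp only [← eval_aeval_mulVec]
  exact ⟨fun h x => by rw [h], MvPolynomial.funext⟩

end LinearSubstitution

theorem eval_maschkeF (x y z t : ℂ) :
    eval ![x, y, z, t] maschkeF = x ^ 8 + y ^ 8 + z ^ 8 + t ^ 8
      + 14 * (x ^ 4 * y ^ 4 + x ^ 4 * z ^ 4 + x ^ 4 * t ^ 4
          + y ^ 4 * z ^ 4 + y ^ 4 * t ^ 4 + z ^ 4 * t ^ 4)
      + 168 * (x ^ 2 * y ^ 2 * z ^ 2 * t ^ 2) := by
  simp [maschkeF]

theorem s1_mulVec (x y z t : ℂ) : s1 *ᵥ ![x, y, z, t] = ![y, x, z, t] := by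
  ext i; fin_cases i <;> simp [s1]

theorem s2_mulVec (x y z t : ℂ) : s2 *ᵥ ![x, y, z, t] = ![x, z, y, t] := by
  ext i; fin_cases i <;> simp [s2]

theorem s3_mulVec (x y z t : ℂ) :
    s3 *ᵥ ![x, y, z, t] = ![-Complex.I * y, Complex.I * x, z, t] := by
  ext i; fin_cases i <;> simp [s3, mul_comm]

theorem s4_mulVec (x y z t : ℂ) :
    s4 *ᵥ ![x, y, z, t] =
      ![(x - y - z - t) / 2, (-x + y - z - t) / 2, (-x - y + z - t) / 2, (-x - y - z + t) / 2] := by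
  ext i; fin_cases i <;> simp [s4] <;> ring

theorem s5_mulVec (x y z t : ℂ) : s5 *ᵥ ![x, y, z, t] = ![-x, y, z, t] := by
  ext i; fin_cases i <;> simp [s5]

theorem eval_s1_mulVec_maschkeF (x y z t : ℂ) :
    eval (s1 *ᵥ ![x, y, z, t]) maschkeF = eval ![x, y, z, t] maschkeF := by
  rw [s1_mulVec, eval_maschkeF, eval_maschkeF]
  ring

theorem eval_s2_mulVec_maschkeF (x y z t : ℂ) :
    eval (s2 *ᵥ ![x, y, z, t]) maschkeF = eval ![x, y, z, t] maschkeF := by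
  rw [s2_mulVec, eval_maschkeF, eval_maschkeF]
  ring

theorem eval_s3_mulVec_maschkeF (x y z t : ℂ) :
    eval (s3 *ᵥ ![x, y, z, t]) maschkeF = eval ![x, y, z, t] maschkeF := by
  have hI8 : Complex.I ^ 8 = 1 := by
    rw [show 8 = 4 * 2 from rfl, pow_mul, Complex.I_pow_four, one_pow]
  rw [s3_mulVec, eval_maschkeF, eval_maschkeF]
  ring_nf
  rw [Complex.I_pow_four, hI8]
  ring

theorem eval_s4_mulVec_maschkeF (x y z t : ℂ) :
    eval (s4 *ᵥ ![x, y, z, t]) maschkeF = eval ![x, y, z, t] maschkeF := by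
  rw [s4_mulVec, eval_maschkeF, eval_maschkeF]
  ring

theorem eval_s5_mulVec_maschkeF (x y z t : ℂ) :
    eval (s5 *ᵥ ![x, y, z, t]) maschkeF = eval ![x, y, z, t] maschkeF := by
  rw [s5_mulVec, eval_maschkeF, eval_maschkeF]
  ring

/-- `f` is invariant under each of the five generating reflections of `G₃₁`:
the pullback of `f` along `v ↦ s v` equals `f`. -/
theorem maschkeF_invariant :
    ∀ s ∈ ({s1, s2, s3, s4, s5} : Set (Matrix (Fin 4) (Fin 4) ℂ)),
      MvPolynomial.aeval
        (fun j : Fin 4 => ∑ k : Fin 4, MvPolynomial.C (s j k) * X k) maschkeF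
        = maschkeF := by
  intro s hs
  rw [aeval_mulVec_eq_self_iff, ← FinVec.forall_iff]
  rcases hs with rfl | rfl | rfl | rfl | rfl
  exacts [eval_s1_mulVec_maschkeF, eval_s2_mulVec_maschkeF, eval_s3_mulVec_maschkeF,
    eval_s4_mulVec_maschkeF, eval_s5_mulVec_maschkeF]
end

section
/- The matrices a and b belong to G₃₁, i.e., a and b lie in the subgroup of GL₄(ℂ) generated by s₁, s₂, s₃, s₄, s₅. -/
open Matrix MvPolynomial

lemma s1_sq : s1 * s1 = 1 := by
  ext i j
  fin_cases i <;> fin_cases j <;>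
    simp [s1, Matrix.mul_apply, Fin.sum_univ_four, Matrix.one_apply] <;>
    norm_num

lemma s2_sq : s2 * s2 = 1 := by
  ext i j
  fin_cases i <;> fin_cases j <;>
    simp [s2, Matrix.mul_apply, Fin.sum_univ_four, Matrix.one_apply] <;>
    norm_num

lemma s3_sq : s3 * s3 = 1 := by
  ext i j
  fin_cases i <;> fin_cases j <;>
    simp [s3, Matrix.mul_apply, Fin.sum_univ_four, Matrix.one_apply] <;>
    norm_num

lemma s4_sq : s4 * s4 = 1 := by
  ext i j
  fin_cases i <;> fin_cases j <;>
    simp [s4, Matrix.mul_apply, Fin.sum_univ_four, Matrix.one_apply] <;>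
    norm_num

lemma s5_sq : s5 * s5 = 1 := by
  ext i j
  fin_cases i <;> fin_cases j <;>
    simp [s5, Matrix.mul_apply, Fin.sum_univ_four, Matrix.one_apply] <;>
    norm_num

/-- `s₁` as an element of `GL₄(ℂ)`. -/
noncomputable def S1 : GL (Fin 4) ℂ := ⟨s1, s1, s1_sq, s1_sq⟩
/-- `s₂` as an element of `GL₄(ℂ)`. -/
noncomputable def S2 : GL (Fin 4) ℂ := ⟨s2, s2, s2_sq, s2_sq⟩
/-- `s₃` as an element of `GL₄(ℂ)`. -/
noncomputable def S3 : GL (Fin 4) ℂ := ⟨s3, s3, s3_sq, s3_sq⟩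
/-- `s₄` as an element of `GL₄(ℂ)`. -/
noncomputable def S4 : GL (Fin 4) ℂ := ⟨s4, s4, s4_sq, s4_sq⟩
/-- `s₅` as an element of `GL₄(ℂ)`. -/
noncomputable def S5 : GL (Fin 4) ℂ := ⟨s5, s5, s5_sq, s5_sq⟩

/-- The Shephard–Todd group `G₃₁`, generated by the five reflections. -/
noncomputable def G31 : Subgroup (GL (Fin 4) ℂ) := Subgroup.closure {S1, S2, S3, S4, S5}

/-- The matrix `a = ((1−i)/2)·B`. -/
noncomputable def aMat : Matrix (Fin 4) (Fin 4) ℂ :=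
  ((1 - Complex.I)/2) • !![1,0,0,1; 0,1,1,0; 0,-1,1,0; 1,0,0,-1]

noncomputable def aMatInv : Matrix (Fin 4) (Fin 4) ℂ :=
  ((1 + Complex.I)/2) • !![1,0,0,1; 0,1,-1,0; 0,1,1,0; 1,0,0,-1]

/-- The matrix `b`. -/
noncomputable def bMat : Matrix (Fin 4) (Fin 4) ℂ :=
  !![0,0,-1,0; -1,0,0,0; 0,1,0,0; 0,0,0,1]

noncomputable def bMatInv : Matrix (Fin 4) (Fin 4) ℂ :=
  !![0,-1,0,0; 0,0,1,0; -1,0,0,0; 0,0,0,1]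

lemma aMat_mul_inv : aMat * aMatInv = 1 := by
  ext i j
  fin_cases i <;> fin_cases j <;>
    simp [aMat, aMatInv, Matrix.mul_apply, Fin.sum_univ_four, Matrix.one_apply] <;>
    norm_num [Complex.ext_iff]

lemma aMat_inv_mul : aMatInv * aMat = 1 := by
  ext i j
  fin_cases i <;> fin_cases j <;>
    simp [aMat, aMatInv, Matrix.mul_apply, Fin.sum_univ_four, Matrix.one_apply] <;>
    norm_num [Complex.ext_iff]

lemma bMat_mul_inv : bMat * bMatInv = 1 := by
  ext i j
  fin_cases i <;> fin_cases j <;>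
    simp [bMat, bMatInv, Matrix.mul_apply, Fin.sum_univ_four, Matrix.one_apply] <;>
    norm_num

lemma bMat_inv_mul : bMatInv * bMat = 1 := by
  ext i j
  fin_cases i <;> fin_cases j <;>
    simp [bMat, bMatInv, Matrix.mul_apply, Fin.sum_univ_four, Matrix.one_apply] <;>
    norm_num

/-- `a` as an element of `GL₄(ℂ)`. -/
noncomputable def aGL : GL (Fin 4) ℂ := ⟨aMat, aMatInv, aMat_mul_inv, aMat_inv_mul⟩

/-- `b` as an element of `GL₄(ℂ)`. -/
noncomputable def bGL : GL (Fin 4) ℂ := ⟨bMat, bMatInv, bMat_mul_inv, bMat_inv_mul⟩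

theorem mem_closure_of_val_eq_list_prod {M : Type*} [Monoid M] {s : Set Mˣ} {g : Mˣ}
    (w : List Mˣ) (hw : ∀ x ∈ w, x ∈ s) (hg : (g : M) = (w.map (↑)).prod) :
    g ∈ Subgroup.closure s := by
  have hg' : g = w.prod := Units.ext (hg.trans (map_list_prod (Units.coeHom M) w).symm)
  exact hg' ▸ (Subgroup.closure s).list_prod_mem fun x hx => Subgroup.subset_closure (hw x hx)

-- The words come from a breadth-first search through the 46080 elements of `G₃₁`; both are of
-- minimal length.
set_option maxHeartbeats 2000000 in
theorem aMat_eq_word :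
    aMat = s4 * s5 * s4 * s3 * s2 * s1 * s5 * s4 * s3 * s2 * s1 * s5 * s4 * s3 := by
  ext i j
  fin_cases i <;> fin_cases j <;>
    simp [s1, s2, s3, s4, s5, aMat, Matrix.mul_apply, Fin.sum_univ_four] <;>
    norm_num [Complex.ext_iff]

theorem bMat_eq_word : bMat = s3 * s1 * s3 * s2 := by
  ext i j
  fin_cases i <;> fin_cases j <;> simp [s1, s2, s3, bMat, Matrix.mul_apply, Fin.sum_univ_four]

/-- The matrices `a` and `b` belong to `G₃₁`. -/
theorem a_b_mem_G31 : aGL ∈ G31 ∧ bGL ∈ G31 :=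
  ⟨mem_closure_of_val_eq_list_prod [S4, S5, S4, S3, S2, S1, S5, S4, S3, S2, S1, S5, S4, S3]
      (by simp) (by simp [S1, S2, S3, S4, S5, aGL, aMat_eq_word, mul_assoc]),
    mem_closure_of_val_eq_list_prod [S3, S1, S3, S2]
      (by simp) (by simp [S1, S2, S3, bGL, bMat_eq_word, mul_assoc])⟩
end
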